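/- Let p = 2^k·q − 1 with k ≥ 2, q prime, λ > 1, 2^k·λ ≤ √p, and λ√p > (p^{1/4}+1)². Suppose E: y² = x³ − mx over Z/p (with computations valid mod every prime divisor of p) admits a point Q such that 2^k·Q ≠ ∞ and q·(2^k·Q) = ∞ in E over every prime divisor of p. Then p is prime. -/

import Mathlib

/-!
Take a prime `r ≡ 3 (mod 4)` dividing `p` (one exists since `p ≡ 3 (mod 4)`). Modulo such an `r`
the curve `y² = x³ − m·x` is supersingular: `x ↦ x³ − m·x` is odd and `−1` is a non-square, so
the character sum vanishes and `#E(F_r) = r + 1`. The point `2^k·Q` has order `q`, hence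
`q ∣ r + 1`, and since `4 ∣ r + 1` also `q ≤ r`. Writing `p = r·s`, both `p` and `r` are `−1`
modulo `q`, so `s ≡ 1 (mod q)`; if `s > 1` then `p ≥ q(q + 1) > q²`, whereas the hypotheses force
`√p < q`. So `p = r`.
-/

/-- The elliptic curve `y² = x³ - m·x` over `ZMod r`. -/
def Emx (r : ℕ) (m : ℤ) : WeierstrassCurve.Affine (ZMod r) :=
  { a₁ := 0, a₂ := 0, a₃ := 0, a₄ := -(m : ZMod r), a₆ := 0 }

open Finset WeierstrassCurve.Affine

theorem Nat.exists_prime_dvd_mod_four_eq_three {n : ℕ} (hn : n % 4 = 3) :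
    ∃ r, r.Prime ∧ r ∣ n ∧ r % 4 = 3 := by
  induction n using Nat.recOnMul with
  | zero => omega
  | one => omega
  | prime p hp => exact ⟨p, hp, dvd_rfl, hn⟩
  | mul a b iha ihb =>
    have hab : a % 4 = 3 ∨ b % 4 = 3 := by
      rw [Nat.mul_mod] at hn
      have := Nat.mod_lt a four_pos
      have := Nat.mod_lt b four_pos
      interval_cases a % 4 <;> interval_cases b % 4 <;> simp_all
    rcases hab with ha | hb
    · obtain ⟨r, hr, hra, hr4⟩ := iha ha
      exact ⟨r, hr, hra.mul_right b, hr4⟩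
    · obtain ⟨r, hr, hrb, hr4⟩ := ihb hb
      exact ⟨r, hr, hrb.mul_left a, hr4⟩

theorem Nat.Prime.le_of_dvd_succ_of_mod_four_eq_three {q r : ℕ} (hq : q.Prime)
    (hqr : q ∣ r + 1) (hr : r % 4 = 3) : q ≤ r := by
  have hne : q ≠ r + 1 := by
    rintro rfl
    rcases hq.eq_one_or_self_of_dvd 2 (by omega) with h | h <;> omega
  have := Nat.le_of_dvd (by omega) hqr
  omega

theorem Nat.eq_of_dvd_of_lt_sq {p q r : ℕ} (hq : q ≠ 1) (hpq : p < q ^ 2) (hqp : q ∣ p + 1)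
    (hrp : r ∣ p) (hqr : q ∣ r + 1) (hqr_le : q ≤ r) : r = p := by
  obtain ⟨s, rfl⟩ := hrp
  have hs : (q : ℤ) ∣ s - 1 := by
    have h₁ : (q : ℤ) ∣ (r + 1) * s := by exact_mod_cast hqr.mul_right s
    have h₂ : (q : ℤ) ∣ r * s + 1 := by exact_mod_cast hqp
    rw [show (s : ℤ) - 1 = (r + 1) * s - (r * s + 1) by ring]
    exact h₁.sub h₂
  obtain rfl | rfl | hs2 : s = 0 ∨ s = 1 ∨ 2 ≤ s := by omega
  · simp [hq] at hqp
  · exact (mul_one r).symm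
  · have : q + 1 ≤ s := by
      have := Int.le_of_dvd (by omega) hs
      omega
    have : q * (q + 1) ≤ r * s := Nat.mul_le_mul hqr_le this
    nlinarith

theorem lt_sq_of_mul_le_sqrt {p q : ℕ} {c lam : ℝ} (hlam : 1 < lam) (h : c * lam ≤ √p)
    (hpq : (p : ℝ) + 1 = c * q) : p < q ^ 2 := by
  have hsq : √p * √p = p := Real.mul_self_sqrt p.cast_nonneg
  have hc : 0 < c := by
    nlinarith [mul_le_mul_of_nonneg_right h (Real.sqrt_nonneg p)]
  have : c * √p < c * q := calc
    c * √p ≤ c * lam * √p :=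
      mul_le_mul_of_nonneg_right (le_mul_of_one_le_right hc.le hlam.le) (Real.sqrt_nonneg _)
    _ ≤ √p * √p := mul_le_mul_of_nonneg_right h (Real.sqrt_nonneg p)
    _ < c * q := by linarith
  have hq : √p < q := lt_of_mul_lt_mul_left this hc.le
  exact_mod_cast (Real.sqrt_lt' ((Real.sqrt_nonneg _).trans_lt hq)).mp hq

theorem ZMod.intCast_ne_zero_of_gcd_eq_one {m : ℤ} {n r : ℕ} [Nontrivial (ZMod r)]
    (hm : Int.gcd m n = 1) (hr : r ∣ n) : (m : ZMod r) ≠ 0 := by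
  have := (Int.isCoprime_iff_gcd_eq_one.mpr hm).map (Int.castRingHom (ZMod r))
  rw [eq_intCast, map_natCast, (ZMod.natCast_eq_zero_iff n r).mpr hr,
    isCoprime_zero_right] at this
  exact this.ne_zero

theorem MulChar.sum_apply_odd_eq_zero {R : Type*} [CommRing R] [Fintype R] (χ : MulChar R ℤ)
    (hχ : χ (-1) = -1) {f : R → R} (hf : Function.Odd f) : ∑ x, χ (f x) = 0 := by
  have : ∑ x, χ (f x) = -∑ x, χ (f x) := calc
    ∑ x, χ (f x) = ∑ x, χ (f (-x)) := (Fintype.sum_equiv (Equiv.neg R) _ _ fun _ ↦ rfl).symm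
    _ = ∑ x, -χ (f x) :=
      Fintype.sum_congr _ _ fun x ↦ by rw [hf, neg_eq_neg_one_mul, map_mul, hχ, neg_one_mul]
    _ = _ := by rw [sum_neg_distrib]
  linarith

theorem card_sq_eq_eq_card_add_sum_quadraticChar {F : Type*} [Field F] [Fintype F]
    [DecidableEq F] (hF : ringChar F ≠ 2) (f : F → F) :
    (Nat.card {P : F × F // P.2 ^ 2 = f P.1} : ℤ) =
      Fintype.card F + ∑ x, quadraticChar F (f x) := by
  have hsqrts x : (#{y | y ^ 2 = f x} : ℤ) = quadraticChar F (f x) + 1 := by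
    simpa only [Set.toFinset_ofPred] using quadraticChar_card_sqrts hF (f x)
  rw [Nat.card_eq_fintype_card, Fintype.card_subtype, card_filter, Fintype.sum_prod_type]
  push_cast
  simp only [sum_boole, hsqrts, sum_add_distrib, sum_const, card_univ]
  ring

theorem WeierstrassCurve.Affine.natCard_point_of_Δ_ne_zero {R : Type*} [CommRing R] [Finite R]
    {W : Affine R} (hΔ : W.Δ ≠ 0) :
    Nat.card W.Point = Nat.card {P : R × R // W.Equation P.1 P.2} + 1 := by
  rw [← Finite.card_option]
  exact Nat.card_congr
    { toFun := fun
        | .zero => none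
        | .some x y h => some ⟨(x, y), h.1⟩
      invFun := fun
        | none => .zero
        | some ⟨(x, y), h⟩ => .some x y ((equation_iff_nonsingular_of_Δ_ne_zero hΔ).mp h)
      left_inv := by rintro (_ | _) <;> rfl
      right_inv := by rintro (_ | ⟨⟨_, _⟩, _⟩) <;> rfl }

namespace Emx

theorem equation_iff {r : ℕ} {m : ℤ} {x y : ZMod r} :
    (Emx r m).Equation x y ↔ y ^ 2 = x ^ 3 - m * x := by
  rw [WeierstrassCurve.Affine.equation_iff]
  simp only [Emx]
  constructor <;> intro h <;> linear_combination h

theorem Δ_eq (r : ℕ) (m : ℤ) : (Emx r m).Δ = 64 * (m : ZMod r) ^ 3 := by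
  simp only [WeierstrassCurve.Δ, WeierstrassCurve.b₂, WeierstrassCurve.b₄,
    WeierstrassCurve.b₆, WeierstrassCurve.b₈, Emx]
  ring

theorem natCard_point {r : ℕ} [Fact r.Prime] (hr : r % 4 = 3) {m : ℤ} (hm : (m : ZMod r) ≠ 0) :
    Nat.card (Emx r m).Point = r + 1 := by
  have hchar : ringChar (ZMod r) ≠ 2 := by
    rw [ZMod.ringChar_zmod_n]
    omega
  have hΔ : (Emx r m).Δ ≠ 0 := by
    rw [Δ_eq, show (64 : ZMod r) = 2 ^ 6 by norm_num]
    exact mul_ne_zero (pow_ne_zero _ (Ring.two_ne_zero hchar)) (pow_ne_zero _ hm)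
  have hχ : quadraticChar (ZMod r) (-1) = -1 := by
    rw [quadraticChar_neg_one_iff_not_isSquare, ZMod.exists_sq_eq_neg_one_iff, not_not, hr]
  have hodd : Function.Odd fun x : ZMod r ↦ x ^ 3 - m * x := fun x ↦ by ring
  have hcount := card_sq_eq_eq_card_add_sum_quadraticChar hchar fun x : ZMod r ↦ x ^ 3 - m * x
  rw [MulChar.sum_apply_odd_eq_zero _ hχ hodd, ZMod.card, add_zero] at hcount
  have hcard : Nat.card {P : ZMod r × ZMod r // P.2 ^ 2 = P.1 ^ 3 - m * P.1} = r := by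
    exact_mod_cast hcount
  rw [natCard_point_of_Δ_ne_zero hΔ,
    Nat.card_congr (Equiv.subtypeEquivRight fun _ ↦ Emx.equation_iff), hcard]

end Emx

theorem stmt_14_general (k q p : ℕ) (hk : 2 ≤ k) (hq : q.Prime) (hp : p = 2 ^ k * q - 1)
    (lam : ℝ) (hlam : 1 < lam)
    (h1 : (2 ^ k : ℝ) * lam ≤ Real.sqrt p)
    (m x y : ℤ) (hm : Int.gcd m p = 1)
    (H : ∀ (r : ℕ) [Fact r.Prime], r ∣ p →
      ∃ h : (Emx r m).Nonsingular (x : ZMod r) (y : ZMod r),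
        2 ^ k • (WeierstrassCurve.Affine.Point.some _ _ h) ≠ 0 ∧
        q • (2 ^ k • WeierstrassCurve.Affine.Point.some _ _ h) = 0) :
    p.Prime := by
  have := Fact.mk hq
  have hp1 : p + 1 = 2 ^ k * q := by
    have : 0 < 2 ^ k * q := Nat.mul_pos (by positivity) hq.pos
    omega
  have hp4 : p % 4 = 3 := by
    have : 2 ^ 2 ∣ 2 ^ k * q := (pow_dvd_pow 2 hk).mul_right q
    omega
  have hpq : p < q ^ 2 := lt_sq_of_mul_le_sqrt hlam h1 (by exact_mod_cast hp1)
  obtain ⟨r, hr, hrp, hr4⟩ := Nat.exists_prime_dvd_mod_four_eq_three hp4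
  have := Fact.mk hr
  obtain ⟨_, hne, hord⟩ := H r hrp
  have hqr : q ∣ r + 1 := by
    rw [← Emx.natCard_point hr4 (ZMod.intCast_ne_zero_of_gcd_eq_one hm hrp),
      ← addOrderOf_eq_prime hord hne]
    exact addOrderOf_dvd_natCard _
  rwa [← Nat.eq_of_dvd_of_lt_sq hq.ne_one hpq (hp1 ▸ dvd_mul_left q _) hrp hqr
    (hq.le_of_dvd_succ_of_mod_four_eq_three hqr hr4)]

/-- **Primality test for `p = 2^k·q − 1` with `q` a large prime.**
Let `p = 2^k·q − 1` with `k ≥ 2` and `q` prime, `λ > 1`, `2^k·λ ≤ √p` and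
`λ√p > (p^{1/4} + 1)²`.  Suppose `E : y² = x³ − m·x` with `gcd(m, p) = 1` admits
a point `Q = (x, y)` such that modulo every prime divisor `r` of `p`, the point
`Q` is on `E(F_r)` with `2^k·Q ≠ ∞` and `q·(2^k·Q) = ∞`.  Then `p` is prime. -/
theorem stmt_14 (k q p : ℕ) (hk : 2 ≤ k) (hq : q.Prime) (hp : p = 2 ^ k * q - 1)
    (lam : ℝ) (hlam : 1 < lam)
    (h1 : (2 ^ k : ℝ) * lam ≤ Real.sqrt p)
    (h2 : lam * Real.sqrt p > ((p : ℝ) ^ ((1 : ℝ) / 4) + 1) ^ 2)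
    (m x y : ℤ) (hm : Int.gcd m p = 1)
    (H : ∀ (r : ℕ) [Fact r.Prime], r ∣ p →
      ∃ h : (Emx r m).Nonsingular (x : ZMod r) (y : ZMod r),
        2 ^ k • (WeierstrassCurve.Affine.Point.some _ _ h) ≠ 0 ∧
        q • (2 ^ k • WeierstrassCurve.Affine.Point.some _ _ h) = 0) :
    p.Prime :=
  stmt_14_general k q p hk hq hp lam hlam h1 m x y hm H
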